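/- arXiv:1705.04238 — 3 statements merged into one kernel-verified Lean document; each statement's English description precedes it below -/
import Mathlib

section
/- Let H be a quasitriangular bialgebra with universal R-matrix R, and let B ⊆ H be a right coideal subalgebra (Δ(B) ⊆ B⊗H). If K ∈ H is invertible and satisfies (K1') Kb = bK for all b ∈ B, and (K3') Δ(K) = R₂₁·K₂·R₁₂·K₁, then the element 𝒦 := R₂₁·K₂·R₁₂ ∈ H⊗H satisfies: (1) 𝒦·Δ(b) = Δ(b)·𝒦 for all b ∈ B; (2) (Δ⊗id)(𝒦) = R₃₂·𝒦₁₃·R₂₃; (3) (id⊗Δ)(𝒦) = R₃₂·𝒦₁₃·R₂₃·𝒦₁₂. -/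
/-! `R₁₂` carries `Δ(b)` to `Δᵒᵖ(b)`, which commutes with `K₂` because `Δ(b) ∈ B ⊗ H`, and `R₂₁`
carries `Δᵒᵖ(b)` back to `Δ(b)`; this is (1). Flipping legs in the hexagon identities gives
`(Δ ⊗ id)(R₂₁) = R₃₂ R₃₁` and `(id ⊗ Δ)(R₂₁) = R₂₁ R₃₁`, and (2) follows at once. For (3), expand with
(K3') and reorder by the Yang–Baxter type relations `R₂₁ R₃₁ R₃₂ = R₃₂ R₃₁ R₂₁` and
`R₂₁ R₂₃ R₁₃ = R₁₃ R₂₃ R₂₁`: both are `R₂₁ Δᵒᵖ = Δ R₂₁` in legs `1, 2`, applied to `(Δ ⊗ id)(R₂₁)`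
and `(Δ ⊗ id)(R)`.
-/
open TensorProduct

/-- leg embedding `x ⊗ y ↦ x ⊗ y ⊗ 1` of `H ⊗ H` into `H ⊗ (H ⊗ H)`. -/
noncomputable def leg12 (R H : Type*) [CommRing R] [Ring H] [Bialgebra R H] :
    H ⊗[R] H →ₐ[R] H ⊗[R] (H ⊗[R] H) :=
  Algebra.TensorProduct.map (AlgHom.id R H) Algebra.TensorProduct.includeLeft

/-- leg embedding `x ⊗ y ↦ x ⊗ 1 ⊗ y`. -/
noncomputable def leg13 (R H : Type*) [CommRing R] [Ring H] [Bialgebra R H] :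
    H ⊗[R] H →ₐ[R] H ⊗[R] (H ⊗[R] H) :=
  Algebra.TensorProduct.map (AlgHom.id R H) Algebra.TensorProduct.includeRight

/-- leg embedding `x ⊗ y ↦ 1 ⊗ x ⊗ y`. -/
noncomputable def leg23 (R H : Type*) [CommRing R] [Ring H] [Bialgebra R H] :
    H ⊗[R] H →ₐ[R] H ⊗[R] (H ⊗[R] H) :=
  Algebra.TensorProduct.includeRight

/-- `Δ ⊗ id`, landing in `H ⊗ (H ⊗ H)`. -/
noncomputable def comulLeft (R H : Type*) [CommRing R] [Ring H] [Bialgebra R H] :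
    H ⊗[R] H →ₐ[R] H ⊗[R] (H ⊗[R] H) :=
  (Algebra.TensorProduct.assoc R R R H H H).toAlgHom.comp
    (Algebra.TensorProduct.map (Bialgebra.comulAlgHom R H) (AlgHom.id R H))

/-- `id ⊗ Δ`, landing in `H ⊗ (H ⊗ H)`. -/
noncomputable def comulRight (R H : Type*) [CommRing R] [Ring H] [Bialgebra R H] :
    H ⊗[R] H →ₐ[R] H ⊗[R] (H ⊗[R] H) :=
  Algebra.TensorProduct.map (AlgHom.id R H) (Bialgebra.comulAlgHom R H)

section
variable {R H : Type*} [CommRing R] [Ring H] [Bialgebra R H]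

local notation "τ" => Algebra.TensorProduct.comm R H H

-- `𝒦 = R₂₁ K₂ R₁₂`
noncomputable def kMatrix (Rm : H ⊗[R] H) (K : H) : H ⊗[R] H :=
  τ Rm * ((1 : H) ⊗ₜ[R] K) * Rm

variable (R H) in
noncomputable def tensorCycle : H ⊗[R] (H ⊗[R] H) ≃ₐ[R] H ⊗[R] (H ⊗[R] H) :=
  (Algebra.TensorProduct.comm R H (H ⊗[R] H)).trans (Algebra.TensorProduct.assoc R R R H H H)

variable {Rm : H ⊗[R] H}

@[simp] lemma leg12_tmul (a b : H) : leg12 R H (a ⊗ₜ b) = a ⊗ₜ (b ⊗ₜ 1) := rfl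

@[simp] lemma leg13_tmul (a b : H) : leg13 R H (a ⊗ₜ b) = a ⊗ₜ (1 ⊗ₜ b) := rfl

@[simp] lemma leg23_tmul (a b : H) : leg23 R H (a ⊗ₜ b) = 1 ⊗ₜ (a ⊗ₜ b) := rfl

@[simp] lemma comulLeft_tmul (a b : H) :
    comulLeft R H (a ⊗ₜ b) =
      Algebra.TensorProduct.assoc R R R H H H (Coalgebra.comul a ⊗ₜ b) := rfl

@[simp] lemma comulRight_tmul (a b : H) :
    comulRight R H (a ⊗ₜ b) = a ⊗ₜ Coalgebra.comul b := rfl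

lemma comm_comm_apply (x : H ⊗[R] H) : τ (τ x) = x :=
  TensorProduct.comm_comm R H H x

lemma tensorCycle_leg13 (X : H ⊗[R] H) : tensorCycle R H (leg13 R H X) = leg23 R H (τ X) := by
  induction X using TensorProduct.induction_on <;> simp_all [tensorCycle]

lemma tensorCycle_leg12 (X : H ⊗[R] H) : tensorCycle R H (leg12 R H X) = leg13 R H (τ X) := by
  induction X using TensorProduct.induction_on <;> simp_all [tensorCycle]

lemma tensorCycle_comulRight (X : H ⊗[R] H) :
    tensorCycle R H (comulRight R H X) = comulLeft R H (τ X) := by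
  induction X using TensorProduct.induction_on <;> simp_all [tensorCycle]

lemma leftComm_leg23 (X : H ⊗[R] H) :
    Algebra.TensorProduct.leftComm R H H H (leg23 R H X) = leg13 R H X := by
  induction X using TensorProduct.induction_on <;> simp_all

lemma leftComm_leg13 (X : H ⊗[R] H) :
    Algebra.TensorProduct.leftComm R H H H (leg13 R H X) = leg23 R H X := by
  induction X using TensorProduct.induction_on <;> simp_all

lemma leg12_eq_assoc (X : H ⊗[R] H) :
    leg12 R H X = Algebra.TensorProduct.assoc R R R H H H (X ⊗ₜ 1) := by
  induction X using TensorProduct.induction_on <;> simp_all [TensorProduct.add_tmul]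

lemma leftComm_assoc_tmul (u : H ⊗[R] H) (c : H) :
    Algebra.TensorProduct.leftComm R H H H (Algebra.TensorProduct.assoc R R R H H H (u ⊗ₜ c)) =
      Algebra.TensorProduct.assoc R R R H H H (τ u ⊗ₜ c) := by
  induction u using TensorProduct.induction_on <;> simp_all [TensorProduct.add_tmul]

lemma commute_leg12_one_tmul_one_tmul (X : H ⊗[R] H) (k : H) :
    Commute (leg12 R H X) (1 ⊗ₜ (1 ⊗ₜ k)) := by
  induction X using TensorProduct.induction_on with
  | zero => exact Commute.zero_left _
  | tmul a b => simp [Commute, SemiconjBy, Algebra.TensorProduct.tmul_mul_tmul]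
  | add u v hu hv => simpa only [map_add] using hu.add_left hv

lemma commute_leg13_one_tmul_tmul_one (X : H ⊗[R] H) (k : H) :
    Commute (leg13 R H X) (1 ⊗ₜ (k ⊗ₜ 1)) := by
  induction X using TensorProduct.induction_on with
  | zero => exact Commute.zero_left _
  | tmul a b => simp [Commute, SemiconjBy, Algebra.TensorProduct.tmul_mul_tmul]
  | add u v hu hv => simpa only [map_add] using hu.add_left hv

lemma semiconjBy_comm_comul (hR1 : ∀ x : H, Rm * Coalgebra.comul x = τ (Coalgebra.comul x) * Rm)
    (x : H) : SemiconjBy (τ Rm) (τ (Coalgebra.comul x)) (Coalgebra.comul x) := by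
  simpa only [comm_comm_apply] using SemiconjBy.map (hR1 x) τ

lemma comulLeft_comm (hR3 : comulRight R H Rm = leg13 R H Rm * leg12 R H Rm) :
    comulLeft R H (τ Rm) = leg23 R H (τ Rm) * leg13 R H (τ Rm) := by
  rw [← tensorCycle_comulRight, hR3, map_mul, tensorCycle_leg13, tensorCycle_leg12]

lemma comulRight_comm (hR2 : comulLeft R H Rm = leg13 R H Rm * leg23 R H Rm) :
    comulRight R H (τ Rm) = leg12 R H (τ Rm) * leg13 R H (τ Rm) := by
  apply (tensorCycle R H).injective
  rw [tensorCycle_comulRight, comm_comm_apply, hR2, map_mul, tensorCycle_leg12,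
    tensorCycle_leg13, comm_comm_apply]

lemma semiconjBy_leg12_comm_comulLeft
    (hR1 : ∀ x : H, Rm * Coalgebra.comul x = τ (Coalgebra.comul x) * Rm) (Y : H ⊗[R] H) :
    SemiconjBy (leg12 R H (τ Rm))
      (Algebra.TensorProduct.leftComm R H H H (comulLeft R H Y)) (comulLeft R H Y) := by
  induction Y using TensorProduct.induction_on with
  | zero => simpa only [map_zero] using SemiconjBy.zero_right _
  | tmul y z =>
    simp only [SemiconjBy, comulLeft_tmul, leftComm_assoc_tmul, leg12_eq_assoc, ← map_mul,
      Algebra.TensorProduct.tmul_mul_tmul, one_mul, mul_one, semiconjBy_comm_comul hR1 y |>.eq]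
  | add u v hu hv => simpa only [map_add] using hu.add_right hv

lemma leg12_comm_mul_leg13_mul_leg23
    (hR1 : ∀ x : H, Rm * Coalgebra.comul x = τ (Coalgebra.comul x) * Rm)
    (hR3 : comulRight R H Rm = leg13 R H Rm * leg12 R H Rm) :
    leg12 R H (τ Rm) * leg13 R H (τ Rm) * leg23 R H (τ Rm) =
      leg23 R H (τ Rm) * leg13 R H (τ Rm) * leg12 R H (τ Rm) := by
  have h := (semiconjBy_leg12_comm_comulLeft hR1 (τ Rm)).eq
  rw [comulLeft_comm hR3, map_mul, leftComm_leg23, leftComm_leg13] at h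
  simpa only [mul_assoc] using h

lemma leg12_comm_mul_leg23_mul_leg13
    (hR1 : ∀ x : H, Rm * Coalgebra.comul x = τ (Coalgebra.comul x) * Rm)
    (hR2 : comulLeft R H Rm = leg13 R H Rm * leg23 R H Rm) :
    leg12 R H (τ Rm) * leg23 R H Rm * leg13 R H Rm =
      leg13 R H Rm * leg23 R H Rm * leg12 R H (τ Rm) := by
  have h := (semiconjBy_leg12_comm_comulLeft hR1 Rm).eq
  rw [hR2, map_mul, leftComm_leg13, leftComm_leg23] at h
  simpa only [mul_assoc] using h

lemma commute_one_tmul_comm_of_mem_range {B : Subalgebra R H} {K : H}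
    (hK : ∀ b ∈ B, K * b = b * K) (w : B ⊗[R] H) :
    Commute ((1 : H) ⊗ₜ[R] K) (τ (TensorProduct.map B.val.toLinearMap LinearMap.id w)) := by
  induction w using TensorProduct.induction_on with
  | zero => simpa only [map_zero] using Commute.zero_right _
  | tmul c d => simp [Commute, SemiconjBy, Algebra.TensorProduct.tmul_mul_tmul, hK c c.2]
  | add u v hu hv => simpa only [map_add] using hu.add_right hv

-- `aᵢⱼ`, `bᵢⱼ`, `kᵢ` are the copies of `R₂₁`, `R`, `K` in the legs `i, j` of `H ⊗ H ⊗ H`.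
lemma kMatrix_coproduct_rearrange {M : Type*} [Monoid M] {a12 a13 a23 k3 b23 k2 b13 b12 : M}
    (ha : a12 * a13 * a23 = a23 * a13 * a12) (hk3 : Commute a12 k3)
    (hb : a12 * b23 * b13 = b13 * b23 * a12) (hk2 : Commute k2 b13) :
    a12 * a13 * (a23 * k3 * b23 * k2) * (b13 * b12) =
      a23 * (a13 * k3 * b13) * b23 * (a12 * k2 * b12) :=
  calc a12 * a13 * (a23 * k3 * b23 * k2) * (b13 * b12)
      = a12 * a13 * a23 * k3 * b23 * (k2 * b13) * b12 := by simp only [mul_assoc]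
    _ = a23 * a13 * (a12 * k3) * b23 * (b13 * k2) * b12 := by
      rw [ha, hk2.eq]; simp only [mul_assoc]
    _ = a23 * a13 * k3 * (a12 * b23 * b13) * k2 * b12 := by
      rw [hk3.eq]; simp only [mul_assoc]
    _ = a23 * (a13 * k3 * b13) * b23 * (a12 * k2 * b12) := by
      rw [hb]; simp only [mul_assoc]

lemma kMatrix_mul_comul {B : Subalgebra R H}
    (hR1 : ∀ x : H, Rm * Coalgebra.comul x = τ (Coalgebra.comul x) * Rm)
    (hB : ∀ b ∈ B, Coalgebra.comul (R := R) b ∈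
      LinearMap.range (TensorProduct.map B.val.toLinearMap (LinearMap.id : H →ₗ[R] H)))
    {K : H} (hK : ∀ b ∈ B, K * b = b * K) {b : H} (hb : b ∈ B) :
    kMatrix Rm K * Coalgebra.comul b = Coalgebra.comul b * kMatrix Rm K := by
  obtain ⟨w, hw⟩ := hB b hb
  have hKb : Commute ((1 : H) ⊗ₜ[R] K) (τ (Coalgebra.comul b)) :=
    hw ▸ commute_one_tmul_comm_of_mem_range hK w
  exact ((semiconjBy_comm_comul hR1 b).mul_left hKb).mul_left (hR1 b)

lemma comulLeft_kMatrix (hR2 : comulLeft R H Rm = leg13 R H Rm * leg23 R H Rm)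
    (hR3 : comulRight R H Rm = leg13 R H Rm * leg12 R H Rm) (K : H) :
    comulLeft R H (kMatrix Rm K) =
      leg23 R H (τ Rm) * leg13 R H (kMatrix Rm K) * leg23 R H Rm := by
  have hK : comulLeft R H ((1 : H) ⊗ₜ[R] K) = leg13 R H ((1 : H) ⊗ₜ[R] K) := by
    simp [Algebra.TensorProduct.one_def]
  simp only [kMatrix, map_mul, comulLeft_comm hR3, hK, hR2, mul_assoc]

lemma comulRight_kMatrix (hR1 : ∀ x : H, Rm * Coalgebra.comul x = τ (Coalgebra.comul x) * Rm)
    (hR2 : comulLeft R H Rm = leg13 R H Rm * leg23 R H Rm)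
    (hR3 : comulRight R H Rm = leg13 R H Rm * leg12 R H Rm) {K : H}
    (hK3 : Coalgebra.comul K = τ Rm * ((1 : H) ⊗ₜ[R] K) * Rm * (K ⊗ₜ[R] (1 : H))) :
    comulRight R H (kMatrix Rm K) =
      leg23 R H (τ Rm) * leg13 R H (kMatrix Rm K) * leg23 R H Rm * leg12 R H (kMatrix Rm K) := by
  have hK : comulRight R H ((1 : H) ⊗ₜ[R] K) = leg23 R H (Coalgebra.comul K) := rfl
  simp only [kMatrix, map_mul, comulRight_comm hR2, hK, hK3, hR3, leg12_tmul, leg13_tmul,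
    leg23_tmul]
  exact kMatrix_coproduct_rearrange (leg12_comm_mul_leg13_mul_leg23 hR1 hR3)
    (commute_leg12_one_tmul_one_tmul _ K) (leg12_comm_mul_leg23_mul_leg13 hR1 hR2)
    (commute_leg13_one_tmul_tmul_one _ K).symm

end

theorem stmt_2_general {R : Type*} [CommRing R] {H : Type*} [Ring H] [Bialgebra R H]
    (Rm : H ⊗[R] H)
    (hR1 : ∀ x : H, Rm * Coalgebra.comul x =
      (Algebra.TensorProduct.comm R H H) (Coalgebra.comul x) * Rm)
    (hR2 : comulLeft R H Rm = leg13 R H Rm * leg23 R H Rm)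
    (hR3 : comulRight R H Rm = leg13 R H Rm * leg12 R H Rm)
    (B : Subalgebra R H)
    (hB : ∀ b ∈ B, Coalgebra.comul (R := R) b ∈
      LinearMap.range (TensorProduct.map B.val.toLinearMap (LinearMap.id : H →ₗ[R] H)))
    (K : H)
    (hK1' : ∀ b ∈ B, K * b = b * K)
    (hK3' : Coalgebra.comul K =
      (Algebra.TensorProduct.comm R H H) Rm *
        (Algebra.TensorProduct.includeRight : H →ₐ[R] H ⊗[R] H) K * Rm *
        (Algebra.TensorProduct.includeLeft : H →ₐ[R] H ⊗[R] H) K) :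
    (∀ b ∈ B,
        ((Algebra.TensorProduct.comm R H H) Rm *
            (Algebra.TensorProduct.includeRight : H →ₐ[R] H ⊗[R] H) K * Rm) *
          Coalgebra.comul b =
        Coalgebra.comul b *
          ((Algebra.TensorProduct.comm R H H) Rm *
            (Algebra.TensorProduct.includeRight : H →ₐ[R] H ⊗[R] H) K * Rm)) ∧
    comulLeft R H
        ((Algebra.TensorProduct.comm R H H) Rm *
          (Algebra.TensorProduct.includeRight : H →ₐ[R] H ⊗[R] H) K * Rm) =
      leg23 R H ((Algebra.TensorProduct.comm R H H) Rm) *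
        leg13 R H ((Algebra.TensorProduct.comm R H H) Rm *
          (Algebra.TensorProduct.includeRight : H →ₐ[R] H ⊗[R] H) K * Rm) *
        leg23 R H Rm ∧
    comulRight R H
        ((Algebra.TensorProduct.comm R H H) Rm *
          (Algebra.TensorProduct.includeRight : H →ₐ[R] H ⊗[R] H) K * Rm) =
      leg23 R H ((Algebra.TensorProduct.comm R H H) Rm) *
        leg13 R H ((Algebra.TensorProduct.comm R H H) Rm *
          (Algebra.TensorProduct.includeRight : H →ₐ[R] H ⊗[R] H) K * Rm) *
        leg23 R H Rm *
        leg12 R H ((Algebra.TensorProduct.comm R H H) Rm *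
          (Algebra.TensorProduct.includeRight : H →ₐ[R] H ⊗[R] H) K * Rm) := by
  simp only [Algebra.TensorProduct.includeRight_apply,
    Algebra.TensorProduct.includeLeft_apply] at hK3' ⊢
  exact ⟨fun b hb => kMatrix_mul_comul hR1 hB hK1' hb, comulLeft_kMatrix hR2 hR3 K,
    comulRight_kMatrix hR1 hR2 hR3 hK3'⟩

/-- Let `H` be a quasitriangular bialgebra with universal `R`-matrix `Rm` and
let `B ⊆ H` be a right coideal subalgebra.  If `K ∈ H` is invertible and satisfies
(K1') `K b = b K` for all `b ∈ B` and (K3') `Δ(K) = R₂₁ K₂ R₁₂ K₁`, then the element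
`𝒦 = R₂₁ K₂ R₁₂` satisfies (1) `𝒦 Δ(b) = Δ(b) 𝒦` for `b ∈ B`,
(2) `(Δ ⊗ id)(𝒦) = R₃₂ 𝒦₁₃ R₂₃` and (3) `(id ⊗ Δ)(𝒦) = R₃₂ 𝒦₁₃ R₂₃ 𝒦₁₂`. -/
theorem stmt_2 {R : Type*} [CommRing R] {H : Type*} [Ring H] [Bialgebra R H]
    (Rm : H ⊗[R] H) (hRunit : IsUnit Rm)
    (hR1 : ∀ x : H, Rm * Coalgebra.comul x =
      (Algebra.TensorProduct.comm R H H) (Coalgebra.comul x) * Rm)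
    (hR2 : comulLeft R H Rm = leg13 R H Rm * leg23 R H Rm)
    (hR3 : comulRight R H Rm = leg13 R H Rm * leg12 R H Rm)
    (B : Subalgebra R H)
    (hB : ∀ b ∈ B, Coalgebra.comul (R := R) b ∈
      LinearMap.range (TensorProduct.map B.val.toLinearMap (LinearMap.id : H →ₗ[R] H)))
    (K : H) (hKunit : IsUnit K)
    (hK1' : ∀ b ∈ B, K * b = b * K)
    (hK3' : Coalgebra.comul K =
      (Algebra.TensorProduct.comm R H H) Rm *
        (Algebra.TensorProduct.includeRight : H →ₐ[R] H ⊗[R] H) K * Rm *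
        (Algebra.TensorProduct.includeLeft : H →ₐ[R] H ⊗[R] H) K) :
    (∀ b ∈ B,
        ((Algebra.TensorProduct.comm R H H) Rm *
            (Algebra.TensorProduct.includeRight : H →ₐ[R] H ⊗[R] H) K * Rm) *
          Coalgebra.comul b =
        Coalgebra.comul b *
          ((Algebra.TensorProduct.comm R H H) Rm *
            (Algebra.TensorProduct.includeRight : H →ₐ[R] H ⊗[R] H) K * Rm)) ∧
    comulLeft R H
        ((Algebra.TensorProduct.comm R H H) Rm *
          (Algebra.TensorProduct.includeRight : H →ₐ[R] H ⊗[R] H) K * Rm) =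
      leg23 R H ((Algebra.TensorProduct.comm R H H) Rm) *
        leg13 R H ((Algebra.TensorProduct.comm R H H) Rm *
          (Algebra.TensorProduct.includeRight : H →ₐ[R] H ⊗[R] H) K * Rm) *
        leg23 R H Rm ∧
    comulRight R H
        ((Algebra.TensorProduct.comm R H H) Rm *
          (Algebra.TensorProduct.includeRight : H →ₐ[R] H ⊗[R] H) K * Rm) =
      leg23 R H ((Algebra.TensorProduct.comm R H H) Rm) *
        leg13 R H ((Algebra.TensorProduct.comm R H H) Rm *
          (Algebra.TensorProduct.includeRight : H →ₐ[R] H ⊗[R] H) K * Rm) *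
        leg23 R H Rm *
        leg12 R H ((Algebra.TensorProduct.comm R H H) Rm *
          (Algebra.TensorProduct.includeRight : H →ₐ[R] H ⊗[R] H) K * Rm) :=
  stmt_2_general Rm hR1 hR2 hR3 B hB K hK1' hK3'
end

section
/- Let H be a quasitriangular bialgebra with R-matrix R and let B ⊆ H be a right coideal subalgebra. Suppose 𝒦 ∈ B⊗H is an invertible universal K-matrix, i.e. it satisfies (K1) 𝒦·Δ(b) = Δ(b)·𝒦 for b ∈ B, (K2) (Δ⊗id)(𝒦) = R₃₂𝒦₁₃R₂₃, and (K3) (id⊗Δ)(𝒦) = R₃₂𝒦₁₃R₂₃𝒦₁₂. Then the element K := (ε⊗id)(𝒦) ∈ H satisfies 𝒦 = R₂₁·K₂·R₁₂, i.e. 𝒦 is recovered from K by conjugation with R-matrices. -/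
open TensorProduct

/-- `ε ⊗ id : H ⊗ H → H`. -/
noncomputable def counitLeft (R H : Type*) [CommRing R] [Ring H] [Bialgebra R H] :
    H ⊗[R] H →ₐ[R] H :=
  (Algebra.TensorProduct.lid R H).toAlgHom.comp
    (Algebra.TensorProduct.map (Bialgebra.counitAlgHom R H) (AlgHom.id R H))

/-- `id ⊗ ε : H ⊗ H → H`. -/
noncomputable def counitRight (R H : Type*) [CommRing R] [Ring H] [Bialgebra R H] :
    H ⊗[R] H →ₐ[R] H :=
  (Algebra.TensorProduct.lid R H).toAlgHom.comp
    ((Algebra.TensorProduct.comm R H R).toAlgHom.comp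
      (Algebra.TensorProduct.map (AlgHom.id R H) (Bialgebra.counitAlgHom R H)))

/-! Apply `ε` to the first tensor leg of (K2). The counit axiom turns `(Δ ⊗ id)(𝒦)` back into
`𝒦`, the factors `R₃₂` and `R₂₃` do not involve the first leg, and `𝒦₁₃` becomes `K₂`. -/

section CounitTensorLeft

variable (R H A : Type*) [CommRing R] [Ring H] [Bialgebra R H] [Ring A] [Algebra R A]

noncomputable def counitTensorLeft : H ⊗[R] A →ₐ[R] A :=
  (Algebra.TensorProduct.lid R A).toAlgHom.comp
    (Algebra.TensorProduct.map (Bialgebra.counitAlgHom R H) (AlgHom.id R A))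

theorem counitLeft_eq_counitTensorLeft : counitLeft R H = counitTensorLeft R H H := rfl

variable {R H A}

@[simp]
theorem counitTensorLeft_tmul (h : H) (a : A) :
    counitTensorLeft R H A (h ⊗ₜ a) = Coalgebra.counit (R := R) h • a := by
  simp [counitTensorLeft]

theorem counitTensorLeft_includeRight (a : A) :
    counitTensorLeft R H A (Algebra.TensorProduct.includeRight a) = a := by
  simp [Algebra.TensorProduct.includeRight_apply]

theorem counitTensorLeft_map_id {B : Type*} [Ring B] [Algebra R B] (f : A →ₐ[R] B)
    (x : H ⊗[R] A) :
    counitTensorLeft R H B (Algebra.TensorProduct.map (AlgHom.id R H) f x) =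
      f (counitTensorLeft R H A x) := by
  induction x using TensorProduct.induction_on with
  | zero => simp
  | tmul h a => simp
  | add x y hx hy => simp only [map_add, hx, hy]

theorem counitTensorLeft_assoc_map_comul (x : H ⊗[R] A) :
    counitTensorLeft R H (H ⊗[R] A)
      (Algebra.TensorProduct.assoc R R R H H A
        (Algebra.TensorProduct.map (Bialgebra.comulAlgHom R H) (AlgHom.id R A) x)) = x := by
  have counit_assoc_tmul : ∀ (c : H ⊗[R] H) (a : A),
      counitTensorLeft R H (H ⊗[R] A) (Algebra.TensorProduct.assoc R R R H H A (c ⊗ₜ a)) =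
        TensorProduct.lid R H (Coalgebra.counit.rTensor H c) ⊗ₜ a := by
    intro c a
    induction c using TensorProduct.induction_on with
    | zero => simp
    | tmul u v => simp [TensorProduct.smul_tmul']
    | add u v hu hv => simp only [add_tmul, map_add, hu, hv]
  induction x using TensorProduct.induction_on with
  | zero => simp
  | tmul h a => simp [counit_assoc_tmul, Coalgebra.rTensor_counit_comul]
  | add x y hx hy => simp only [map_add, hx, hy]

end CounitTensorLeft

theorem counitTensorLeft_comulLeft {R H : Type*} [CommRing R] [Ring H] [Bialgebra R H]
    (x : H ⊗[R] H) : counitTensorLeft R H (H ⊗[R] H) (comulLeft R H x) = x :=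
  counitTensorLeft_assoc_map_comul x

theorem stmt_3_general {R : Type*} [CommRing R] {H : Type*} [Ring H] [Bialgebra R H]
    (Rm : H ⊗[R] H)
    (𝒦 : H ⊗[R] H)
    (hK2 : comulLeft R H 𝒦 =
      leg23 R H ((Algebra.TensorProduct.comm R H H) Rm) * leg13 R H 𝒦 * leg23 R H Rm) :
    𝒦 = (Algebra.TensorProduct.comm R H H) Rm *
        (Algebra.TensorProduct.includeRight : H →ₐ[R] H ⊗[R] H) (counitLeft R H 𝒦) * Rm := by
  have h := congrArg (counitTensorLeft R H (H ⊗[R] H)) hK2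
  rwa [map_mul, map_mul, counitTensorLeft_comulLeft, leg23, counitTensorLeft_includeRight,
    counitTensorLeft_includeRight, leg13, counitTensorLeft_map_id,
    ← counitLeft_eq_counitTensorLeft] at h

/-- If `𝒦 ∈ B ⊗ H` is an invertible universal K-matrix for a right coideal
subalgebra `B` of a quasitriangular bialgebra `H`, then `K := (ε ⊗ id)(𝒦)` recovers `𝒦` via
`𝒦 = R₂₁ K₂ R₁₂`. -/
theorem stmt_3 {R : Type*} [CommRing R] {H : Type*} [Ring H] [Bialgebra R H]
    (Rm : H ⊗[R] H) (hRunit : IsUnit Rm)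
    (hR1 : ∀ x : H, Rm * Coalgebra.comul x =
      (Algebra.TensorProduct.comm R H H) (Coalgebra.comul x) * Rm)
    (hR2 : comulLeft R H Rm = leg13 R H Rm * leg23 R H Rm)
    (hR3 : comulRight R H Rm = leg13 R H Rm * leg12 R H Rm)
    (hRe1 : counitLeft R H Rm = 1) (hRe2 : counitRight R H Rm = 1)
    (B : Subalgebra R H)
    (hB : ∀ b ∈ B, Coalgebra.comul (R := R) b ∈
      LinearMap.range (TensorProduct.map B.val.toLinearMap (LinearMap.id : H →ₗ[R] H)))
    (𝒦 : H ⊗[R] H) (h𝒦unit : IsUnit 𝒦)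
    (h𝒦B : 𝒦 ∈ LinearMap.range
      (TensorProduct.map B.val.toLinearMap (LinearMap.id : H →ₗ[R] H)))
    (hK1 : ∀ b ∈ B, 𝒦 * Coalgebra.comul b = Coalgebra.comul b * 𝒦)
    (hK2 : comulLeft R H 𝒦 =
      leg23 R H ((Algebra.TensorProduct.comm R H H) Rm) * leg13 R H 𝒦 * leg23 R H Rm)
    (hK3 : comulRight R H 𝒦 =
      leg23 R H ((Algebra.TensorProduct.comm R H H) Rm) * leg13 R H 𝒦 * leg23 R H Rm *
        leg12 R H 𝒦) :
    𝒦 = (Algebra.TensorProduct.comm R H H) Rm *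
        (Algebra.TensorProduct.includeRight : H →ₐ[R] H ⊗[R] H) (counitLeft R H 𝒦) * Rm :=
  stmt_3_general Rm 𝒦 hK2
end

section
/- Let H be a quasitriangular bialgebra with R-matrix R and let B be a right H-comodule algebra with coaction Δ_B : B → B⊗H admitting an invertible universal K-matrix 𝒦 ∈ B⊗H (satisfying (K1) 𝒦Δ_B(b) = Δ_B(b)𝒦 for all b ∈ B, (K2) (Δ_B⊗id)(𝒦) = R₃₂𝒦₁₃R₂₃, (K3) (id⊗Δ)(𝒦) = R₃₂𝒦₁₃R₂₃𝒦₁₂). Then for any B-module M and H-modules V, W, the operators e_{M,V} := action of 𝒦 on M⊗V satisfy e_{M⊗V,W} = (id_M ⊗ c_{W,V})(e_{M,W} ⊗ id_V)(id_M ⊗ c_{V,W}) and e_{M,V⊗W} = (id_M ⊗ c_{W,V})(e_{M,W} ⊗ id_V)(id_M ⊗ c_{V,W})(e_{M,V} ⊗ id_W), where c_{V,W} = flip ∘ R is the braiding on H-modules. In other words, the category of B-modules is a braided module category over the category of H-modules. -/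
open TensorProduct

/-- The representation of `A₁ ⊗ A₂` on `M₁ ⊗ M₂` induced by representations of the factors. -/
noncomputable def repTensor (k : Type*) [CommRing k] {A₁ A₂ M₁ M₂ : Type*}
    [Ring A₁] [Algebra k A₁] [Ring A₂] [Algebra k A₂]
    [AddCommGroup M₁] [Module k M₁] [AddCommGroup M₂] [Module k M₂]
    (ρ₁ : A₁ →ₐ[k] Module.End k M₁) (ρ₂ : A₂ →ₐ[k] Module.End k M₂) :
    A₁ ⊗[k] A₂ →ₐ[k] Module.End k (M₁ ⊗[k] M₂) :=
  (Module.endTensorEndAlgHom (R := k) (S := k) (A := k)).comp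
    (Algebra.TensorProduct.map ρ₁ ρ₂)

/-!
Apply the representation of `B ⊗ H ⊗ H` on `M ⊗ V ⊗ W` to (K2) and (K3). The factor `𝒦₁₃` acts as
`e_{M,W} ⊗ id_V` conjugated by the flip of `V` and `W`, `𝒦₁₂` as `e_{M,V} ⊗ id_W`, and `R₂₃`, `R₃₂`
act on `V ⊗ W` only; since `R₃₂` acts as `flip ∘ R ∘ flip`, the flips combine with the actions of
`R` into the braidings `c_{V,W}` and `c_{W,V}`.
-/

section RepTensor

variable {k : Type*} [CommRing k]
variable {A₁ A₂ A₃ : Type*} [Ring A₁] [Algebra k A₁] [Ring A₂] [Algebra k A₂] [Ring A₃]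
  [Algebra k A₃]
variable {M V W : Type*} [AddCommGroup M] [Module k M] [AddCommGroup V] [Module k V]
  [AddCommGroup W] [Module k W]
variable (ρ₁ : A₁ →ₐ[k] Module.End k M) (ρ₂ : A₂ →ₐ[k] Module.End k V)
  (ρ₃ : A₃ →ₐ[k] Module.End k W)

@[simp]
lemma repTensor_tmul_apply (a : A₁) (b : A₂) (m : M) (v : V) :
    repTensor k ρ₁ ρ₂ (a ⊗ₜ b) (m ⊗ₜ v) = ρ₁ a m ⊗ₜ ρ₂ b v := by
  simp [repTensor, Module.endTensorEndAlgHom_apply]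

lemma repTensor_comp_left {A₀ : Type*} [Ring A₀] [Algebra k A₀] (f : A₀ →ₐ[k] A₁)
    (z : A₀ ⊗[k] A₂) :
    repTensor k (ρ₁.comp f) ρ₂ z =
      repTensor k ρ₁ ρ₂ (Algebra.TensorProduct.map f (AlgHom.id k A₂) z) := by
  induction z using TensorProduct.induction_on with
  | zero => simp
  | add x y hx hy => simp only [map_add, hx, hy]
  | tmul a b => simp [repTensor, Module.endTensorEndAlgHom_apply]

lemma repTensor_comp_right {A₀ : Type*} [Ring A₀] [Algebra k A₀] (g : A₀ →ₐ[k] A₂)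
    (z : A₁ ⊗[k] A₀) :
    repTensor k ρ₁ (ρ₂.comp g) z =
      repTensor k ρ₁ ρ₂ (Algebra.TensorProduct.map (AlgHom.id k A₁) g z) := by
  induction z using TensorProduct.induction_on with
  | zero => simp
  | add x y hx hy => simp only [map_add, hx, hy]
  | tmul a b => simp [repTensor, Module.endTensorEndAlgHom_apply]

lemma repTensor_assoc (z : (A₁ ⊗[k] A₂) ⊗[k] A₃) :
    (repTensor k (repTensor k ρ₁ ρ₂) ρ₃ z : (M ⊗[k] V) ⊗[k] W →ₗ[k] (M ⊗[k] V) ⊗[k] W) =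
      (TensorProduct.assoc k M V W).symm.toLinearMap ∘ₗ
        (repTensor k ρ₁ (repTensor k ρ₂ ρ₃) (Algebra.TensorProduct.assoc k k k A₁ A₂ A₃ z) :
          M ⊗[k] (V ⊗[k] W) →ₗ[k] M ⊗[k] (V ⊗[k] W)) ∘ₗ
        (TensorProduct.assoc k M V W).toLinearMap := by
  ext m v w
  induction z using TensorProduct.induction_on with
  | zero => simp
  | add x y hx hy => simp_all [map_add]
  | tmul x c =>
    induction x using TensorProduct.induction_on with
    | zero => simp
    | add x y hx hy => simp_all [add_tmul, map_add]
    | tmul a b => simp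

lemma repTensor_includeRight (y : A₂ ⊗[k] A₃) :
    (repTensor k ρ₁ (repTensor k ρ₂ ρ₃)
        (Algebra.TensorProduct.includeRight (R := k) (A := A₁) y) :
      M ⊗[k] (V ⊗[k] W) →ₗ[k] M ⊗[k] (V ⊗[k] W)) =
      LinearMap.lTensor M (repTensor k ρ₂ ρ₃ y) := by
  ext m v w
  induction y using TensorProduct.induction_on with
  | zero => simp
  | add x y hx hy => simp_all [map_add]
  | tmul b c => simp

lemma repTensor_map_includeLeft (z : A₁ ⊗[k] A₂) :
    (repTensor k ρ₁ (repTensor k ρ₂ ρ₃)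
        (Algebra.TensorProduct.map (AlgHom.id k A₁)
          (Algebra.TensorProduct.includeLeft : A₂ →ₐ[k] A₂ ⊗[k] A₃) z) :
      M ⊗[k] (V ⊗[k] W) →ₗ[k] M ⊗[k] (V ⊗[k] W)) =
      (TensorProduct.assoc k M V W).toLinearMap ∘ₗ
        LinearMap.rTensor W (repTensor k ρ₁ ρ₂ z) ∘ₗ
        (TensorProduct.assoc k M V W).symm.toLinearMap := by
  ext m v w
  induction z using TensorProduct.induction_on with
  | zero => simp
  | add x y hx hy => simp_all [map_add]
  | tmul a b => simp

lemma repTensor_map_includeRight (z : A₁ ⊗[k] A₃) :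
    (repTensor k ρ₁ (repTensor k ρ₂ ρ₃)
        (Algebra.TensorProduct.map (AlgHom.id k A₁)
          (Algebra.TensorProduct.includeRight : A₃ →ₐ[k] A₂ ⊗[k] A₃) z) :
      M ⊗[k] (V ⊗[k] W) →ₗ[k] M ⊗[k] (V ⊗[k] W)) =
      LinearMap.lTensor M (TensorProduct.comm k W V).toLinearMap ∘ₗ
        (TensorProduct.assoc k M W V).toLinearMap ∘ₗ
        LinearMap.rTensor V (repTensor k ρ₁ ρ₃ z) ∘ₗ
        (TensorProduct.assoc k M W V).symm.toLinearMap ∘ₗ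
        LinearMap.lTensor M (TensorProduct.comm k V W).toLinearMap := by
  ext m v w
  induction z using TensorProduct.induction_on with
  | zero => simp
  | add x y hx hy => simp_all [map_add]
  | tmul a c => simp

lemma repTensor_comm (y : A₃ ⊗[k] A₂) :
    (repTensor k ρ₂ ρ₃ (Algebra.TensorProduct.comm k A₃ A₂ y) : V ⊗[k] W →ₗ[k] V ⊗[k] W) =
      (TensorProduct.comm k W V).toLinearMap ∘ₗ repTensor k ρ₃ ρ₂ y ∘ₗ
        (TensorProduct.comm k V W).toLinearMap := by
  ext v w
  induction y using TensorProduct.induction_on with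
  | zero => simp
  | add x y hx hy => simp_all [map_add]
  | tmul c b => simp

end RepTensor

lemma LinearMap.lTensor_comm_comp_lTensor_comm {k M V W X : Type*} [CommRing k]
    [AddCommGroup M] [Module k M] [AddCommGroup V] [Module k V] [AddCommGroup W] [Module k W]
    [AddCommGroup X] [Module k X] (f : X →ₗ[k] M ⊗[k] (W ⊗[k] V)) :
    lTensor M (TensorProduct.comm k V W).toLinearMap ∘ₗ
      lTensor M (TensorProduct.comm k W V).toLinearMap ∘ₗ f = f := by
  rw [← comp_assoc, ← lTensor_comp, TensorProduct.comm_comp_comm, lTensor_id, id_comp]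

theorem stmt_6_general {k : Type*} [Field k] {H : Type*} [Ring H] [Bialgebra k H]
    {B : Type*} [Ring B] [Algebra k B]
    (Rm : H ⊗[k] H)
    (ΔB : B →ₐ[k] B ⊗[k] H)
    (𝒦 : B ⊗[k] H)
    (hK2 : (Algebra.TensorProduct.assoc k k k B H H)
        ((Algebra.TensorProduct.map ΔB (AlgHom.id k H)) 𝒦) =
      (Algebra.TensorProduct.includeRight : H ⊗[k] H →ₐ[k] B ⊗[k] (H ⊗[k] H))
          ((Algebra.TensorProduct.comm k H H) Rm) *
        (Algebra.TensorProduct.map (AlgHom.id k B)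
          (Algebra.TensorProduct.includeRight : H →ₐ[k] H ⊗[k] H)) 𝒦 *
        (Algebra.TensorProduct.includeRight : H ⊗[k] H →ₐ[k] B ⊗[k] (H ⊗[k] H)) Rm)
    (hK3 : (Algebra.TensorProduct.map (AlgHom.id k B) (Bialgebra.comulAlgHom k H)) 𝒦 =
      (Algebra.TensorProduct.includeRight : H ⊗[k] H →ₐ[k] B ⊗[k] (H ⊗[k] H))
          ((Algebra.TensorProduct.comm k H H) Rm) *
        (Algebra.TensorProduct.map (AlgHom.id k B)
          (Algebra.TensorProduct.includeRight : H →ₐ[k] H ⊗[k] H)) 𝒦 *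
        (Algebra.TensorProduct.includeRight : H ⊗[k] H →ₐ[k] B ⊗[k] (H ⊗[k] H)) Rm *
        (Algebra.TensorProduct.map (AlgHom.id k B)
          (Algebra.TensorProduct.includeLeft : H →ₐ[k] H ⊗[k] H)) 𝒦)
    {M V W : Type*} [AddCommGroup M] [Module k M] [AddCommGroup V] [Module k V]
    [AddCommGroup W] [Module k W]
    (ρM : B →ₐ[k] Module.End k M) (ρV : H →ₐ[k] Module.End k V)
    (ρW : H →ₐ[k] Module.End k W) :
    (let cVW : V ⊗[k] W →ₗ[k] W ⊗[k] V :=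
      (TensorProduct.comm k V W).toLinearMap ∘ₗ
        (repTensor k ρV ρW Rm : V ⊗[k] W →ₗ[k] V ⊗[k] W)
    let cWV : W ⊗[k] V →ₗ[k] V ⊗[k] W :=
      (TensorProduct.comm k W V).toLinearMap ∘ₗ
        (repTensor k ρW ρV Rm : W ⊗[k] V →ₗ[k] W ⊗[k] V)
    let eMV : M ⊗[k] V →ₗ[k] M ⊗[k] V := repTensor k ρM ρV 𝒦
    let eMW : M ⊗[k] W →ₗ[k] M ⊗[k] W := repTensor k ρM ρW 𝒦
    let ρMV : B →ₐ[k] Module.End k (M ⊗[k] V) := (repTensor k ρM ρV).comp ΔB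
    let ρVW : H →ₐ[k] Module.End k (V ⊗[k] W) :=
      (repTensor k ρV ρW).comp (Bialgebra.comulAlgHom k H)
    -- the braiding `e_{M ⊗ V, W}` satisfies the first braided module identity
    ((repTensor k ρMV ρW 𝒦 : (M ⊗[k] V) ⊗[k] W →ₗ[k] (M ⊗[k] V) ⊗[k] W) =
      (TensorProduct.assoc k M V W).symm.toLinearMap ∘ₗ
        LinearMap.lTensor M cWV ∘ₗ
        (TensorProduct.assoc k M W V).toLinearMap ∘ₗ
        LinearMap.rTensor V eMW ∘ₗ
        (TensorProduct.assoc k M W V).symm.toLinearMap ∘ₗ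
        LinearMap.lTensor M cVW ∘ₗ
        (TensorProduct.assoc k M V W).toLinearMap) ∧
    -- the braiding `e_{M, V ⊗ W}` satisfies the second braided module identity
    ((repTensor k ρM ρVW 𝒦 : M ⊗[k] (V ⊗[k] W) →ₗ[k] M ⊗[k] (V ⊗[k] W)) =
      LinearMap.lTensor M cWV ∘ₗ
        (TensorProduct.assoc k M W V).toLinearMap ∘ₗ
        LinearMap.rTensor V eMW ∘ₗ
        (TensorProduct.assoc k M W V).symm.toLinearMap ∘ₗ
        LinearMap.lTensor M cVW ∘ₗ
        (TensorProduct.assoc k M V W).toLinearMap ∘ₗ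
        LinearMap.rTensor W eMV ∘ₗ
        (TensorProduct.assoc k M V W).symm.toLinearMap)) := by
  dsimp only
  constructor
  · rw [repTensor_comp_left, repTensor_assoc, hK2, map_mul, map_mul, Module.End.mul_eq_comp,
      Module.End.mul_eq_comp, repTensor_includeRight, repTensor_includeRight,
      repTensor_map_includeRight, repTensor_comm]
    simp only [LinearMap.lTensor_comp, LinearMap.comp_assoc,
      LinearMap.lTensor_comm_comp_lTensor_comm]
  · rw [repTensor_comp_right, hK3, map_mul, map_mul, map_mul, Module.End.mul_eq_comp,
      Module.End.mul_eq_comp, Module.End.mul_eq_comp, repTensor_includeRight,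
      repTensor_includeRight, repTensor_map_includeRight, repTensor_map_includeLeft,
      repTensor_comm]
    simp only [LinearMap.lTensor_comp, LinearMap.comp_assoc,
      LinearMap.lTensor_comm_comp_lTensor_comm]

/-- If `B` is a right `H`-comodule algebra over a quasitriangular bialgebra
`(H, R)` admitting an invertible universal K-matrix `𝒦 ∈ B ⊗ H`, then for every `B`-module `M`
and `H`-modules `V, W` the operators `e_{M,V}` given by the action of `𝒦` satisfy the two
braided module category identities (with braiding `c = flip ∘ R`). -/
theorem stmt_6 {k : Type*} [Field k] {H : Type*} [Ring H] [Bialgebra k H]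
    {B : Type*} [Ring B] [Algebra k B]
    (Rm : H ⊗[k] H) (hRunit : IsUnit Rm)
    (hR1 : ∀ x : H, Rm * Coalgebra.comul x =
      (Algebra.TensorProduct.comm k H H) (Coalgebra.comul x) * Rm)
    (hR2 : comulLeft k H Rm = leg13 k H Rm * leg23 k H Rm)
    (hR3 : comulRight k H Rm = leg13 k H Rm * leg12 k H Rm)
    (ΔB : B →ₐ[k] B ⊗[k] H)
    (hcoassoc : ∀ b : B,
      (Algebra.TensorProduct.assoc k k k B H H)
          ((Algebra.TensorProduct.map ΔB (AlgHom.id k H)) (ΔB b)) =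
        (Algebra.TensorProduct.map (AlgHom.id k B) (Bialgebra.comulAlgHom k H)) (ΔB b))
    (𝒦 : B ⊗[k] H) (h𝒦unit : IsUnit 𝒦)
    (hK1 : ∀ b : B, 𝒦 * ΔB b = ΔB b * 𝒦)
    (hK2 : (Algebra.TensorProduct.assoc k k k B H H)
        ((Algebra.TensorProduct.map ΔB (AlgHom.id k H)) 𝒦) =
      (Algebra.TensorProduct.includeRight : H ⊗[k] H →ₐ[k] B ⊗[k] (H ⊗[k] H))
          ((Algebra.TensorProduct.comm k H H) Rm) *
        (Algebra.TensorProduct.map (AlgHom.id k B)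
          (Algebra.TensorProduct.includeRight : H →ₐ[k] H ⊗[k] H)) 𝒦 *
        (Algebra.TensorProduct.includeRight : H ⊗[k] H →ₐ[k] B ⊗[k] (H ⊗[k] H)) Rm)
    (hK3 : (Algebra.TensorProduct.map (AlgHom.id k B) (Bialgebra.comulAlgHom k H)) 𝒦 =
      (Algebra.TensorProduct.includeRight : H ⊗[k] H →ₐ[k] B ⊗[k] (H ⊗[k] H))
          ((Algebra.TensorProduct.comm k H H) Rm) *
        (Algebra.TensorProduct.map (AlgHom.id k B)
          (Algebra.TensorProduct.includeRight : H →ₐ[k] H ⊗[k] H)) 𝒦 *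
        (Algebra.TensorProduct.includeRight : H ⊗[k] H →ₐ[k] B ⊗[k] (H ⊗[k] H)) Rm *
        (Algebra.TensorProduct.map (AlgHom.id k B)
          (Algebra.TensorProduct.includeLeft : H →ₐ[k] H ⊗[k] H)) 𝒦)
    {M V W : Type*} [AddCommGroup M] [Module k M] [AddCommGroup V] [Module k V]
    [AddCommGroup W] [Module k W]
    (ρM : B →ₐ[k] Module.End k M) (ρV : H →ₐ[k] Module.End k V)
    (ρW : H →ₐ[k] Module.End k W) :
    (let cVW : V ⊗[k] W →ₗ[k] W ⊗[k] V :=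
      (TensorProduct.comm k V W).toLinearMap ∘ₗ
        (repTensor k ρV ρW Rm : V ⊗[k] W →ₗ[k] V ⊗[k] W)
    let cWV : W ⊗[k] V →ₗ[k] V ⊗[k] W :=
      (TensorProduct.comm k W V).toLinearMap ∘ₗ
        (repTensor k ρW ρV Rm : W ⊗[k] V →ₗ[k] W ⊗[k] V)
    let eMV : M ⊗[k] V →ₗ[k] M ⊗[k] V := repTensor k ρM ρV 𝒦
    let eMW : M ⊗[k] W →ₗ[k] M ⊗[k] W := repTensor k ρM ρW 𝒦
    let ρMV : B →ₐ[k] Module.End k (M ⊗[k] V) := (repTensor k ρM ρV).comp ΔB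
    let ρVW : H →ₐ[k] Module.End k (V ⊗[k] W) :=
      (repTensor k ρV ρW).comp (Bialgebra.comulAlgHom k H)
    -- the braiding `e_{M ⊗ V, W}` satisfies the first braided module identity
    ((repTensor k ρMV ρW 𝒦 : (M ⊗[k] V) ⊗[k] W →ₗ[k] (M ⊗[k] V) ⊗[k] W) =
      (TensorProduct.assoc k M V W).symm.toLinearMap ∘ₗ
        LinearMap.lTensor M cWV ∘ₗ
        (TensorProduct.assoc k M W V).toLinearMap ∘ₗ
        LinearMap.rTensor V eMW ∘ₗ
        (TensorProduct.assoc k M W V).symm.toLinearMap ∘ₗ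
        LinearMap.lTensor M cVW ∘ₗ
        (TensorProduct.assoc k M V W).toLinearMap) ∧
    -- the braiding `e_{M, V ⊗ W}` satisfies the second braided module identity
    ((repTensor k ρM ρVW 𝒦 : M ⊗[k] (V ⊗[k] W) →ₗ[k] M ⊗[k] (V ⊗[k] W)) =
      LinearMap.lTensor M cWV ∘ₗ
        (TensorProduct.assoc k M W V).toLinearMap ∘ₗ
        LinearMap.rTensor V eMW ∘ₗ
        (TensorProduct.assoc k M W V).symm.toLinearMap ∘ₗ
        LinearMap.lTensor M cVW ∘ₗ
        (TensorProduct.assoc k M V W).toLinearMap ∘ₗ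
        LinearMap.rTensor W eMV ∘ₗ
        (TensorProduct.assoc k M V W).symm.toLinearMap)) :=
  stmt_6_general Rm ΔB 𝒦 hK2 hK3 ρM ρV ρW
end
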